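/- Let {G_n}_{n∈ω} be a closed tower of metrizable topological groups satisfying the Group Condition (GC), and let G := ⋃_{n∈ω} G_n carry the Bamboo-Shoot topology τ_BS (a Hausdorff group topology coinciding with τ_gr, so G = glim G_n). Then G is an ℵ-space, i.e., G is regular and possesses a σ-locally finite k-network. -/

import Mathlib

open Topology Filter Set Pointwise

/-- The finite product `U k · U (k+1) ⋯ U (k+j)` of a sequence of subsets of a group. -/
def bsProd {G : Type*} [Group G] (U : ℕ → Set G) (k : ℕ) : ℕ → Set G
  | 0 => U k
  | j + 1 => bsProd U k j * U (k + (j + 1))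

/-- `U⁺[k] = ⋃_{n ≥ k} U k · U (k+1) ⋯ U n`. -/
def bsPlus {G : Type*} [Group G] (U : ℕ → Set G) (k : ℕ) : Set G :=
  ⋃ j, bsProd U k j

/-- The Bamboo-Shoot set `U[k] = (U⁺[k])⁻¹ · U⁺[k]`. -/
def bsU {G : Type*} [Group G] (U : ℕ → Set G) (k : ℕ) : Set G :=
  (bsPlus U k)⁻¹ * bsPlus U k

/-- A tower of topological groups inside an ambient (abstract) group `G`:
an increasing sequence of subgroups covering `G`, each carrying its own group topology,
such that all inclusions `G_n → G_{n+1}` are continuous. -/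
structure GroupTower (G : Type*) [Group G] where
  H : ℕ → Subgroup G
  τ : ∀ n, TopologicalSpace (H n)
  topGroup : ∀ n, @IsTopologicalGroup (H n) (τ n) _
  mono : ∀ n, H n ≤ H (n + 1)
  union : ∀ g : G, ∃ n, g ∈ H n
  incl_cont : ∀ n, Continuous[τ n, τ (n + 1)] (Subgroup.inclusion (mono n))

namespace GroupTower

variable {G : Type*} [Group G]

/-- The tower is closed: each `G_n` carries the subspace topology from `G_{n+1}`
and is closed in `G_{n+1}`. -/
def IsClosedTower (T : GroupTower G) : Prop :=
  ∀ n, T.τ n = (T.τ (n + 1)).induced (Subgroup.inclusion (T.mono n)) ∧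
    IsClosed[T.τ (n + 1)] (Set.range (Subgroup.inclusion (T.mono n)))

/-- `U` (viewed as a subset of the ambient group) is an open symmetric neighborhood of
the identity in `G_n`. -/
def NsMem (T : GroupTower G) (n : ℕ) (U : Set G) : Prop :=
  U ⊆ (T.H n : Set G) ∧ IsOpen[T.τ n] (((↑) : T.H n → G) ⁻¹' U) ∧ (1 : G) ∈ U ∧ U⁻¹ = U

/-- The Group Condition (GC). -/
def GC (T : GroupTower G) : Prop :=
  ∀ U : ℕ → Set G, (∀ n, T.NsMem n (U n)) → ∀ k : ℕ,
    ∃ V : ℕ → Set G, (∀ n, T.NsMem n (V n)) ∧ bsU V k ⊆ bsPlus U k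

/-- `τBS` is the Bamboo-Shoot topology of the tower: at every point `g` the sets
`g • U[k]` form a neighborhood base. -/
def IsBambooShoot (T : GroupTower G) (τBS : TopologicalSpace G) : Prop :=
  ∀ g : G, (@nhds G τBS g).HasBasis
    (fun p : (ℕ → Set G) × ℕ => ∀ n, T.NsMem n (p.1 n))
    (fun p => g • bsU p.1 p.2)

/-- `τind` is the inductive limit topology of the tower in the category of topological
spaces: a set is open iff its trace on every `G_n` is open. -/
def IsIndTop (T : GroupTower G) (τind : TopologicalSpace G) : Prop :=
  ∀ A : Set G, IsOpen[τind] A ↔ ∀ n, IsOpen[T.τ n] (((↑) : T.H n → G) ⁻¹' A)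

/-- `t` is a group topology on `G` making all the inclusions `G_n → G` continuous. -/
def IsCompatGroupTopology (T : GroupTower G) (t : TopologicalSpace G) : Prop :=
  @IsTopologicalGroup G t _ ∧ ∀ n, Continuous[T.τ n, t] ((↑) : T.H n → G)

/-- `t` coincides with `τ_gr`, i.e. `(G, t) = glim G_n` : `t` is a group topology making
all inclusions continuous, and it is the finest such topology (every open set of any
such topology is `t`-open). -/
def IsGLim (T : GroupTower G) (t : TopologicalSpace G) : Prop :=
  T.IsCompatGroupTopology t ∧
    ∀ t' : TopologicalSpace G, T.IsCompatGroupTopology t' →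
      ∀ A : Set G, IsOpen[t'] A → IsOpen[t] A

end GroupTower

/-- A topological space is Ascoli if every compact subset of `C_k(X, ℝ)` is
equicontinuous. -/
def IsAscoliSpace (X : Type*) [TopologicalSpace X] : Prop :=
  ∀ K : Set C(X, ℝ), IsCompact K → Equicontinuous fun f : K => (f.1 : X → ℝ)

/-- A family of sets is a k-network. -/
def IsKNetwork {X : Type*} [TopologicalSpace X] (N : Set (Set X)) : Prop :=
  ∀ K U : Set X, IsCompact K → IsOpen U → K ⊆ U →
    ∃ F : Set (Set X), F ⊆ N ∧ F.Finite ∧ K ⊆ ⋃₀ F ∧ ⋃₀ F ⊆ U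

/-- A family of sets is locally finite. -/
def IsLocallyFiniteFamily {X : Type*} [TopologicalSpace X] (N : Set (Set X)) : Prop :=
  ∀ x : X, ∃ V ∈ 𝓝 x, {s ∈ N | (s ∩ V).Nonempty}.Finite

/-- An ℵ-space: a regular space with a σ-locally finite k-network. -/
def IsAlephSpace (X : Type*) [TopologicalSpace X] : Prop :=
  RegularSpace X ∧ ∃ N : ℕ → Set (Set X),
    (∀ n, IsLocallyFiniteFamily (N n)) ∧ IsKNetwork (⋃ n, N n)

/-- An ℵ₀-space: a regular space with a countable k-network. -/
def IsAleph0Space (X : Type*) [TopologicalSpace X] : Prop :=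
  RegularSpace X ∧ ∃ N : Set (Set X), N.Countable ∧ IsKNetwork N

/-- A k_ω-space. -/
def IsKOmegaSpace (X : Type*) [TopologicalSpace X] : Prop :=
  ∃ K : ℕ → Set X, (∀ n, IsCompact (K n)) ∧ (∀ n, K n ⊆ K (n + 1)) ∧
    (⋃ n, K n) = Set.univ ∧
    ∀ A : Set X, IsClosed A ↔ ∀ n, IsClosed (((↑) : K n → X) ⁻¹' A)

/-- An MK_ω-space: a k_ω-space witnessed by metrizable compact sets. -/
def IsMKOmegaSpace (X : Type*) [TopologicalSpace X] : Prop :=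
  ∃ K : ℕ → Set X, (∀ n, IsCompact (K n)) ∧
    (∀ n, TopologicalSpace.MetrizableSpace (K n)) ∧ (∀ n, K n ⊆ K (n + 1)) ∧
    (⋃ n, K n) = Set.univ ∧
    ∀ A : Set X, IsClosed A ↔ ∀ n, IsClosed (((↑) : K n → X) ⁻¹' A)
/-! ### Auxiliary development -/

section BSAlgebra

variable {G : Type*} [Group G]

lemma bsProd_succ' (U : ℕ → Set G) (k j : ℕ) :
    bsProd U k (j+1) = bsProd U k j * U (k + (j+1)) := rfl

lemma bsProd_subset_bsProd_succ (U : ℕ → Set G) (k : ℕ) (hU : ∀ n, (1:G) ∈ U n) (j : ℕ) :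
    bsProd U k j ⊆ bsProd U k (j+1) := fun x hx => ⟨x, hx, 1, hU _, mul_one x⟩

lemma bsProd_mono (U : ℕ → Set G) (k : ℕ) (hU : ∀ n, (1:G) ∈ U n) {i j : ℕ} (h : i ≤ j) :
    bsProd U k i ⊆ bsProd U k j := by
  induction h with
  | refl => exact subset_rfl
  | step h ih => exact ih.trans (bsProd_subset_bsProd_succ U k hU _)

lemma one_mem_bsProd (U : ℕ → Set G) (k : ℕ) (hU : ∀ n, (1:G) ∈ U n) (j : ℕ) :
    (1:G) ∈ bsProd U k j := by
  induction j with
  | zero => exact hU k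
  | succ j ih => exact ⟨1, ih, 1, hU _, mul_one 1⟩

lemma one_mem_bsPlus (U : ℕ → Set G) (k : ℕ) (hU : ∀ n, (1:G) ∈ U n) :
    (1:G) ∈ bsPlus U k := mem_iUnion.mpr ⟨0, one_mem_bsProd U k hU 0⟩

lemma one_mem_bsU (U : ℕ → Set G) (k : ℕ) (hU : ∀ n, (1:G) ∈ U n) :
    (1:G) ∈ bsU U k :=
  ⟨1, by simpa using one_mem_bsPlus U k hU, 1, one_mem_bsPlus U k hU, mul_one 1⟩

lemma bsU_inv (U : ℕ → Set G) (k : ℕ) : (bsU U k)⁻¹ = bsU U k := by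
  unfold bsU
  rw [mul_inv_rev, inv_inv]

lemma bsProd_subset_bsPlus (U : ℕ → Set G) (k j : ℕ) : bsProd U k j ⊆ bsPlus U k :=
  subset_iUnion (bsProd U k) j

/-- `bsU` as a union of `Pᶜ⁻¹ * Pᶜ` for `c` in any cofinal set. -/
lemma bsU_eq_iUnion (U : ℕ → Set G) (k : ℕ) (hU : ∀ n, (1:G) ∈ U n) (c₀ : ℕ) :
    bsU U k = ⋃ c, (bsProd U k (c₀ + c))⁻¹ * bsProd U k (c₀ + c) := by
  apply subset_antisymm
  · rintro x ⟨a, ha, b, hb, rfl⟩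
    rcases mem_inv.mp ha with ha'
    rcases mem_iUnion.mp ha' with ⟨i, hi⟩
    rcases mem_iUnion.mp hb with ⟨j, hj⟩
    refine mem_iUnion.mpr ⟨i + j, ?_⟩
    exact ⟨a, mem_inv.mpr (bsProd_mono U k hU (le_trans (Nat.le_add_right i j) (Nat.le_add_left _ _)) hi),
      b, bsProd_mono U k hU (le_trans (Nat.le_add_left j i) (Nat.le_add_left _ _)) hj, rfl⟩
  · refine iUnion_subset fun c => ?_
    rintro x ⟨a, ha, b, hb, rfl⟩
    exact ⟨a, Set.inv_subset_inv.mpr (bsProd_subset_bsPlus U k _) ha,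
      b, bsProd_subset_bsPlus U k _ hb, rfl⟩

end BSAlgebra
namespace GroupTower

variable {G : Type*} [Group G] (T : GroupTower G)

/-- Preimage of an ambient set in the `m`-th group of the tower. -/
def pre (m : ℕ) (S : Set G) : Set (T.H m) := ((↑) : T.H m → G) ⁻¹' S

lemma H_mono : Monotone T.H := monotone_nat_of_le_succ T.mono

lemma pre_mono {m : ℕ} {S S' : Set G} (h : S ⊆ S') : T.pre m S ⊆ T.pre m S' :=
  fun _ hx => h hx

lemma pre_inter (m : ℕ) (S S' : Set G) : T.pre m (S ∩ S') = T.pre m S ∩ T.pre m S' := rfl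

lemma pre_incl {n m : ℕ} (h : n ≤ m) (S : Set G) :
    T.pre n S = (Subgroup.inclusion (T.H_mono h)) ⁻¹' (T.pre m S) := rfl

lemma tau_induced (hcl : T.IsClosedTower) {n m : ℕ} (h : n ≤ m) :
    T.τ n = (T.τ m).induced (Subgroup.inclusion (T.H_mono h)) := by
  induction m, h using Nat.le_induction with
  | base =>
    exact (induced_id (t := T.τ n)).symm
  | succ m hm ih =>
    rw [ih, (hcl m).1, induced_compose]
    rfl

lemma isOpen_pre_of_le (hcl : T.IsClosedTower) {n m : ℕ} (h : n ≤ m) {S : Set G}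
    (hS : IsOpen[T.τ m] (T.pre m S)) : IsOpen[T.τ n] (T.pre n S) := by
  letI := T.τ m
  letI := (T.τ m).induced (Subgroup.inclusion (T.H_mono h))
  rw [T.pre_incl h S, T.tau_induced hcl h]
  exact hS.preimage continuous_induced_dom

lemma pre_H_closed (hcl : T.IsClosedTower) {n m : ℕ} (h : n ≤ m) :
    IsClosed[T.τ m] (T.pre m (T.H n : Set G)) := by
  induction m, h using Nat.le_induction with
  | base =>
    letI := T.τ n
    have : T.pre n (T.H n : Set G) = Set.univ := by
      ext x; simp [pre, x.2]
    rw [this]; exact isClosed_univ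
  | succ m hm ih =>
    letI := T.τ m
    letI := T.τ (m+1)
    have hind := T.tau_induced hcl (Nat.le_succ m)
    rw [hind] at ih
    rcases isClosed_induced_iff.mp ih with ⟨C, hC, hCpre⟩
    have : T.pre (m+1) (T.H n : Set G) =
        Set.range (Subgroup.inclusion (T.mono m)) ∩ C := by
      ext x
      constructor
      · intro hx
        have hxm : (x : G) ∈ T.H m := T.H_mono hm hx
        refine ⟨⟨⟨(x : G), hxm⟩, rfl⟩, ?_⟩
        have hd : (⟨(x : G), hxm⟩ : T.H m) ∈ (Subgroup.inclusion (T.H_mono (Nat.le_succ m))) ⁻¹' C := by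
          rw [hCpre]; exact hx
        exact hd
      · rintro ⟨⟨d, rfl⟩, hC'⟩
        have : d ∈ (Subgroup.inclusion (T.H_mono (Nat.le_succ m))) ⁻¹' C := hC'
        rw [hCpre] at this
        exact this
    rw [this]
    exact IsClosed.inter (hcl m).2 hC

/-- Upward extension of a relatively open set. -/
lemma exists_extension (hcl : T.IsClosedTower) {n m : ℕ} (h : n ≤ m) {S : Set G}
    (hSH : S ⊆ (T.H n : Set G)) (hS : IsOpen[T.τ n] (T.pre n S)) :
    ∃ S' : Set G, S' ⊆ (T.H m : Set G) ∧ IsOpen[T.τ m] (T.pre m S') ∧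
      S' ∩ (T.H n : Set G) = S := by
  letI := T.τ m
  rw [T.tau_induced hcl h] at hS
  rcases isOpen_induced_iff.mp hS with ⟨O, hO, hOpre⟩
  refine ⟨((↑) : T.H m → G) '' O, ?_, ?_, ?_⟩
  · rintro x ⟨y, _, rfl⟩; exact y.2
  · rwa [pre, Set.preimage_image_eq O Subtype.coe_injective]
  · ext x
    constructor
    · rintro ⟨⟨y, hy, rfl⟩, hxn⟩
      have : (⟨(y : G), hxn⟩ : T.H n) ∈ T.pre n S := by
        rw [← hOpre]
        exact hy
      exact this
    · intro hx
      have hxn : x ∈ T.H n := hSH hx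
      have hd : (⟨x, hxn⟩ : T.H n) ∈ T.pre n S := hx
      rw [← hOpre] at hd
      exact ⟨⟨Subgroup.inclusion (T.H_mono h) ⟨x, hxn⟩, hd, rfl⟩, hxn⟩

end GroupTower
namespace GroupTower

variable {G : Type*} [Group G] (T : GroupTower G)

lemma mem_symm {U : Set G} (h : U⁻¹ = U) {x : G} : x⁻¹ ∈ U ↔ x ∈ U := by
  constructor
  · intro hx
    rw [← h]
    exact Set.mem_inv.mpr hx
  · intro hx
    rw [← h]
    exact Set.mem_inv.mpr (by simpa using hx)

lemma coe_image_inv {n : ℕ} (A : Set (T.H n)) :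
    (((↑) : T.H n → G) '' A)⁻¹ = ((↑) : T.H n → G) '' (A⁻¹) := by
  ext x
  simp only [Set.mem_inv, Set.mem_image]
  constructor
  · rintro ⟨a, ha, hax⟩
    refine ⟨a⁻¹, by simpa [Set.mem_inv] using ha, ?_⟩
    have : ((a⁻¹ : T.H n) : G) = ((a : G))⁻¹ := rfl
    rw [this, hax, inv_inv]
  · rintro ⟨a, ha, rfl⟩
    exact ⟨a⁻¹, by simpa [Set.mem_inv] using ha, rfl⟩

lemma nsMem_coe_H (n : ℕ) : T.NsMem n (T.H n : Set G) := by
  refine ⟨subset_rfl, ?_, one_mem _, ?_⟩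
  · letI := T.τ n
    show IsOpen (T.pre n (T.H n : Set G))
    have : T.pre n (T.H n : Set G) = Set.univ := by ext x; simp [pre, x.2]
    rw [this]; exact isOpen_univ
  · ext x; simp [Set.mem_inv]

lemma nsMem_of_finite_inter (m : ℕ) {F' : Set G} (hF : F'.Finite) (M : G → Set G)
    (hM : ∀ f ∈ F', T.NsMem m (M f)) :
    T.NsMem m ((T.H m : Set G) ∩ ⋂ f ∈ F', M f) := by
  letI := T.τ m
  refine ⟨Set.inter_subset_left, ?_, ⟨one_mem _, Set.mem_biInter fun f hf => (hM f hf).2.2.1⟩, ?_⟩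
  · show IsOpen (T.pre m ((T.H m : Set G) ∩ ⋂ f ∈ F', M f))
    have : T.pre m ((T.H m : Set G) ∩ ⋂ f ∈ F', M f) =
        ⋂ f ∈ F', T.pre m (M f) := by
      ext x; simp [pre, x.2]
    rw [this]
    exact hF.isOpen_biInter fun f hf => (hM f hf).2.1
  · ext x
    simp only [Set.mem_inv, Set.mem_inter_iff, Set.mem_iInter]
    constructor
    · rintro ⟨hH, hMf⟩
      refine ⟨by simpa using inv_mem hH, fun f hf => (mem_symm (hM f hf).2.2.2).mp (hMf f hf)⟩
    · rintro ⟨hH, hMf⟩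
      refine ⟨by simpa using inv_mem hH, fun f hf => (mem_symm (hM f hf).2.2.2).mpr (hMf f hf)⟩

/-- L1': a symmetric open identity neighborhood whose square lies in a given
relatively open set containing 1. -/
lemma exists_sq_subset (m : ℕ) {S : Set G} (h1 : (1:G) ∈ S)
    (hS : IsOpen[T.τ m] (T.pre m S)) :
    ∃ W, T.NsMem m W ∧ W * W ⊆ (T.H m : Set G) ∩ S := by
  letI := T.τ m
  haveI := T.topGroup m
  have h1' : (1 : T.H m) ∈ T.pre m S := by simpa [pre] using h1
  have hnh : T.pre m S ∈ 𝓝 (1 : T.H m) := hS.mem_nhds h1'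
  obtain ⟨V, Vo, V1, hVV⟩ := exists_open_nhds_one_mul_subset hnh
  set V' := V ∩ V⁻¹ with hV'def
  have hV'o : IsOpen V' := Vo.inter Vo.inv
  have hV'1 : (1 : T.H m) ∈ V' := ⟨V1, by simpa [Set.mem_inv] using V1⟩
  refine ⟨((↑) : T.H m → G) '' V', ⟨?_, ?_, ?_, ?_⟩, ?_⟩
  · rintro x ⟨y, _, rfl⟩; exact y.2
  · show IsOpen (T.pre m (((↑) : T.H m → G) '' V'))
    have : T.pre m (((↑) : T.H m → G) '' V') = V' :=
      Set.preimage_image_eq V' Subtype.coe_injective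
    rwa [this]
  · exact ⟨1, hV'1, rfl⟩
  · rw [T.coe_image_inv, hV'def, Set.inter_inv, inv_inv, Set.inter_comm]
  · rintro x ⟨a, ⟨v1, hv1, rfl⟩, b, ⟨v2, hv2, rfl⟩, rfl⟩
    have hmem : v1 * v2 ∈ V * V := ⟨v1, hv1.1, v2, hv2.1, rfl⟩
    have : v1 * v2 ∈ T.pre m S := hVV hmem
    exact ⟨(v1 * v2).2, this⟩

/-- L3: a symmetric open identity neighborhood avoiding a relatively closed set
not containing 1 (with room to square). -/
lemma exists_avoid (m : ℕ) {C : Set G} (hC : IsClosed[T.τ m] (T.pre m C))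
    (h1 : (1:G) ∉ C) :
    ∃ W, T.NsMem m W ∧ (W * W) ∩ C = ∅ := by
  letI := T.τ m
  obtain ⟨W, hW, hWW⟩ := T.exists_sq_subset m (S := Cᶜ) h1 hC.isOpen_compl
  refine ⟨W, hW, ?_⟩
  apply Set.eq_empty_of_forall_notMem
  rintro x ⟨hx, hxC⟩
  exact (hWW hx).2 hxC

/-- L2: a symmetric open identity neighborhood one level up whose square has trace
inside a given identity neighborhood. -/
lemma exists_sq_trace_subset (hcl : T.IsClosedTower) (m : ℕ) {M : Set G}
    (hM : T.NsMem m M) :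
    ∃ W, T.NsMem (m+1) W ∧ (W * W) ∩ (T.H m : Set G) ⊆ M := by
  letI := T.τ (m+1)
  obtain ⟨S', hS'H, hS'o, hS'tr⟩ := T.exists_extension hcl (Nat.le_succ m) hM.1 hM.2.1
  set S'' : Set G := S' ∪ ((T.H (m+1) : Set G) \ (T.H m : Set G)) with hS''
  have hS''o : IsOpen[T.τ (m+1)] (T.pre (m+1) S'') := by
    have : T.pre (m+1) S'' = T.pre (m+1) S' ∪ (T.pre (m+1) (T.H m : Set G))ᶜ := by
      ext x
      simp only [pre, Set.mem_preimage, Set.mem_union, Set.mem_compl_iff, hS'',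
        Set.mem_diff]
      have := x.2
      tauto
    rw [this]
    exact hS'o.union (T.pre_H_closed hcl (Nat.le_succ m)).isOpen_compl
  have h1 : (1:G) ∈ S'' := by
    left
    have : (1:G) ∈ S' ∩ (T.H m : Set G) := by rw [hS'tr]; exact hM.2.2.1
    exact this.1
  obtain ⟨W, hW, hWW⟩ := T.exists_sq_subset (m+1) h1 hS''o
  refine ⟨W, hW, ?_⟩
  rintro x ⟨hx, hxm⟩
  rcases (hWW hx).2 with h | h
  · have : x ∈ S' ∩ (T.H m : Set G) := ⟨h, hxm⟩
    rwa [hS'tr] at this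
  · exact absurd hxm h.2

end GroupTower
namespace GroupTower

variable {G : Type*} [Group G] (T : GroupTower G)

lemma bsProd_subset_H {U : ℕ → Set G} (hU : ∀ n, T.NsMem n (U n)) (k : ℕ) :
    ∀ j, bsProd U k j ⊆ (T.H (k+j) : Set G) := by
  intro j
  induction j with
  | zero => exact (hU k).1
  | succ j ih =>
    rintro x ⟨p, hp, u, hu, rfl⟩
    exact mul_mem (T.H_mono (by omega) (ih hp)) ((hU (k+(j+1))).1 hu)

lemma isOpen_pre_smul (m : ℕ) {g : G} (hg : g ∈ T.H m) {S : Set G}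
    (hS : IsOpen[T.τ m] (T.pre m S)) : IsOpen[T.τ m] (T.pre m (g • S)) := by
  letI := T.τ m
  haveI := T.topGroup m
  have hd : T.pre m (g • S) =
      (fun x : T.H m => (⟨g, hg⟩ : T.H m)⁻¹ * x) ⁻¹' (T.pre m S) := by
    ext x
    simp only [pre, Set.mem_preimage]
    constructor
    · intro hx
      have := Set.mem_smul_set_iff_inv_smul_mem.mp hx
      simpa [smul_eq_mul] using this
    · intro hx
      apply Set.mem_smul_set_iff_inv_smul_mem.mpr
      simpa [smul_eq_mul] using hx
  rw [hd]
  exact hS.preimage (continuous_const.mul continuous_id)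

lemma isOpen_pre_bsProd {U : ℕ → Set G} (hU : ∀ n, T.NsMem n (U n)) (k : ℕ) :
    ∀ j, 1 ≤ j → IsOpen[T.τ (k+j)] (T.pre (k+j) (bsProd U k j)) := by
  rintro (_ | j) hj
  · omega
  · letI := T.τ (k+(j+1))
    have hpre : T.pre (k+(j+1)) (bsProd U k (j+1)) =
        ⋃ p : bsProd U k j, T.pre (k+(j+1)) ((p : G) • U (k+(j+1))) := by
      ext x
      constructor
      · rintro ⟨p, hp, u, hu, hx⟩
        exact Set.mem_iUnion.mpr ⟨⟨p, hp⟩, Set.mem_smul_set.mpr ⟨u, hu, hx⟩⟩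
      · intro hx
        rcases Set.mem_iUnion.mp hx with ⟨⟨p, hp⟩, hx'⟩
        rcases Set.mem_smul_set.mp hx' with ⟨u, hu, hux⟩
        exact ⟨p, hp, u, hu, hux⟩
    rw [hpre]
    apply isOpen_iUnion
    rintro ⟨p, hp⟩
    exact T.isOpen_pre_smul (k+(j+1))
      (T.H_mono (by omega) (T.bsProd_subset_H hU k j hp)) (hU (k+(j+1))).2.1

lemma smul_inv_mul_decomp (g : G) (P : Set G) :
    g • (P⁻¹ * P) = ⋃ a ∈ P, (g * a⁻¹) • P := by
  ext x
  simp only [Set.mem_smul_set, Set.mem_mul, Set.mem_inv, Set.mem_iUnion]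
  constructor
  · rintro ⟨y, ⟨a, ha, b, hb, rfl⟩, rfl⟩
    refine ⟨a⁻¹, by simpa using ha, b, hb, by simp [smul_eq_mul, mul_assoc]⟩
  · rintro ⟨a, ha, b, hb, rfl⟩
    exact ⟨a⁻¹ * b, ⟨a⁻¹, by simpa using ha, b, hb, rfl⟩, by simp [smul_eq_mul, mul_assoc]⟩

lemma isOpen_pre_smul_bsU (hcl : T.IsClosedTower) {U : ℕ → Set G}
    (hU : ∀ n, T.NsMem n (U n)) (k n : ℕ) {g : G} (hg : g ∈ T.H n) :
    IsOpen[T.τ n] (T.pre n (g • bsU U k)) := by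
  letI := T.τ n
  have hones : ∀ m, (1:G) ∈ U m := fun m => (hU m).2.2.1
  have h1 : g • bsU U k = ⋃ c, g • ((bsProd U k (n+1+c))⁻¹ * bsProd U k (n+1+c)) := by
    rw [bsU_eq_iUnion U k hones (n+1), Set.smul_set_iUnion]
  have h2 : T.pre n (g • bsU U k) =
      ⋃ c, ⋃ a : bsProd U k (n+1+c), T.pre n ((g * (a : G)⁻¹) • bsProd U k (n+1+c)) := by
    rw [h1]
    ext x
    simp only [pre, Set.mem_preimage, Set.mem_iUnion]
    constructor
    · rintro ⟨c, hc⟩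
      rw [smul_inv_mul_decomp] at hc
      rcases Set.mem_iUnion₂.mp hc with ⟨a, ha, hx⟩
      exact ⟨c, ⟨a, ha⟩, hx⟩
    · rintro ⟨c, ⟨a, ha⟩, hx⟩
      refine ⟨c, ?_⟩
      rw [smul_inv_mul_decomp]
      exact Set.mem_iUnion₂.mpr ⟨a, ha, hx⟩
  rw [h2]
  apply isOpen_iUnion
  intro c
  apply isOpen_iUnion
  rintro ⟨a, ha⟩
  apply T.isOpen_pre_of_le hcl (show n ≤ k + (n+1+c) by omega)
  apply T.isOpen_pre_smul
  · exact mul_mem (T.H_mono (by omega) hg)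
      (inv_mem (T.bsProd_subset_H hU k (n+1+c) ha))
  · exact T.isOpen_pre_bsProd hU k (n+1+c) (by omega)

end GroupTower
namespace GroupTower

variable {G : Type*} [Group G] (T : GroupTower G)

/-- Lemma X: a `bsPlus` set avoiding a uniformly relatively closed set `F ⊆ H k`
not containing the identity. -/
lemma exists_bsPlus_avoid_closed (hcl : T.IsClosedTower) (k : ℕ) {F : Set G}
    (hFk : F ⊆ (T.H k : Set G))
    (hFcl : ∀ J, k ≤ J → IsClosed[T.τ J] (T.pre J F))
    (h1 : (1:G) ∉ F) :
    ∃ U : ℕ → Set G, (∀ n, T.NsMem n (U n)) ∧ bsPlus U k ∩ F = ∅ := by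
  obtain ⟨W0, hW0, hW0F⟩ := T.exists_avoid k (hFcl k le_rfl) h1
  let St : ℕ → Type _ := fun j => {PW : Set G × Set G //
    T.NsMem (k+j) PW.2 ∧ PW.1 ⊆ (T.H (k+j) : Set G) ∧ (PW.1 * PW.2) ∩ F = ∅}
  have hstep : ∀ j (s : St j), ∃ W' : Set G, T.NsMem (k+(j+1)) W' ∧
      (W' * W') ∩ (T.H (k+j) : Set G) ⊆ s.1.2 := fun j s =>
    T.exists_sq_trace_subset hcl (k+j) s.2.1
  have hStep : ∀ j (s : St j), ∀ W' : Set G, T.NsMem (k+(j+1)) W' →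
      ((W' * W') ∩ (T.H (k+j) : Set G) ⊆ s.1.2) →
      (T.NsMem (k+(j+1)) W' ∧ (s.1.1 * W') ⊆ (T.H (k+(j+1)) : Set G) ∧
        ((s.1.1 * W') * W') ∩ F = ∅) := by
    intro j s W' hW' htr
    refine ⟨hW', ?_, ?_⟩
    · rintro x ⟨p, hp, w, hw, rfl⟩
      exact mul_mem (T.H_mono (by omega) (s.2.2.1 hp)) (hW'.1 hw)
    · apply Set.eq_empty_of_forall_notMem
      rintro x ⟨hx, hxF⟩
      rw [mul_assoc] at hx
      rcases hx with ⟨p, hp, w, hw, rfl⟩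
      have hpH : p ∈ T.H (k+j) := s.2.2.1 hp
      have hxH : p * w ∈ T.H (k+j) := T.H_mono (Nat.le_add_right k j) (hFk hxF)
      have hwH : w ∈ T.H (k+j) := by
        have : (p⁻¹ * (p * w)) ∈ T.H (k+j) := mul_mem (inv_mem hpH) hxH
        simpa [mul_assoc] using this
      have hwW : w ∈ W' * W' := hw
      have hwM : w ∈ s.1.2 := htr ⟨hwW, hwH⟩
      have : p * w ∈ (s.1.1 * s.1.2) ∩ F := ⟨⟨p, hp, w, hwM, rfl⟩, hxF⟩
      rw [s.2.2.2] at this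
      exact this
  let step : ∀ j, St j → St (j+1) := fun j s =>
    ⟨(s.1.1 * Classical.choose (hstep j s), Classical.choose (hstep j s)),
      hStep j s _ (Classical.choose_spec (hstep j s)).1 (Classical.choose_spec (hstep j s)).2⟩
  let st : ∀ j, St j := fun j => Nat.rec
    (⟨(W0, W0), hW0, hW0.1, hW0F⟩ : St 0) step j
  have hst_succ : ∀ j, (st (j+1)).1.1 = (st j).1.1 * (st (j+1)).1.2 := fun j => rfl
  let U : ℕ → Set G := fun n => if h : k ≤ n then (st (n-k)).1.2 else (T.H n : Set G)
  have hUk : ∀ j, U (k+j) = (st j).1.2 := by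
    intro j
    show (if h : k ≤ k + j then (st (k+j-k)).1.2 else _) = _
    rw [dif_pos (Nat.le_add_right k j), Nat.add_sub_cancel_left]
  have hUmem : ∀ n, T.NsMem n (U n) := by
    intro n
    by_cases h : k ≤ n
    · obtain ⟨j, rfl⟩ : ∃ j, n = k + j := ⟨n - k, by omega⟩
      rw [hUk j]
      exact (st j).2.1
    · show T.NsMem n (if h : k ≤ n then (st (n-k)).1.2 else (T.H n : Set G))
      rw [dif_neg h]
      exact T.nsMem_coe_H n
  have hProd : ∀ j, bsProd U k j = (st j).1.1 := by
    intro j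
    induction j with
    | zero =>
      show U k = W0
      have : U (k + 0) = (st 0).1.2 := hUk 0
      exact this
    | succ j ih =>
      rw [bsProd_succ', ih, hUk (j+1), ← hst_succ j]
  refine ⟨U, hUmem, ?_⟩
  apply Set.eq_empty_of_forall_notMem
  rintro x ⟨hx, hxF⟩
  rcases mem_iUnion.mp hx with ⟨j, hj⟩
  rw [hProd j] at hj
  have hone : (1:G) ∈ (st j).1.2 := (st j).2.1.2.2.1
  have : x ∈ ((st j).1.1 * (st j).1.2) ∩ F := ⟨⟨x, hj, 1, hone, mul_one x⟩, hxF⟩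
  rw [(st j).2.2.2] at this
  exact this

end GroupTower
namespace GroupTower

variable {G : Type*} [Group G] (T : GroupTower G)

lemma isClosed_pre_of_finite
    (hmetr : ∀ n, @TopologicalSpace.MetrizableSpace (T.H n) (T.τ n)) (m : ℕ)
    {A : Set G} (hfin : (A ∩ (T.H m : Set G)).Finite) :
    IsClosed[T.τ m] (T.pre m A) := by
  letI := T.τ m
  haveI := hmetr m
  have heq : T.pre m A = T.pre m (A ∩ (T.H m : Set G)) := by
    ext x; simp [pre, x.2]
  rw [heq]
  have : (T.pre m (A ∩ (T.H m : Set G))).Finite :=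
    Set.Finite.preimage (Set.injOn_of_injective Subtype.coe_injective) hfin
  exact this.isClosed

lemma isClosed_pre_coset (hcl : T.IsClosedTower) {n m : ℕ} (h : n ≤ m) {f : G}
    (hf : f ∈ T.H m) :
    IsClosed[T.τ m] (T.pre m ((T.H n : Set G) * {f})) := by
  letI := T.τ m
  haveI := T.topGroup m
  have heq : T.pre m ((T.H n : Set G) * {f}) =
      (fun x : T.H m => x * (⟨f, hf⟩ : T.H m)⁻¹) ⁻¹' (T.pre m (T.H n : Set G)) := by
    ext x
    simp only [pre, Set.mem_preimage]
    constructor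
    · rintro ⟨h', hh', y, hy, hxy⟩
      have hyf : y = f := Set.mem_singleton_iff.mp hy
      show ((x : G)) * f⁻¹ ∈ (T.H n : Set G)
      rw [← hxy, hyf]
      simpa using hh'
    · intro hx
      refine ⟨(x : G) * f⁻¹, hx, f, rfl, by group⟩
  rw [heq]
  exact (T.pre_H_closed hcl h).preimage (continuous_id.mul continuous_const)

/-- E-core: a `bsPlus` set avoiding a set with finite traces on all levels. -/
lemma exists_bsPlus_avoid_finite (hcl : T.IsClosedTower)
    (hmetr : ∀ n, @TopologicalSpace.MetrizableSpace (T.H n) (T.τ n)) (k : ℕ)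
    {A : Set G} (hfin : ∀ J, (A ∩ (T.H J : Set G)).Finite) (h1 : (1:G) ∉ A) :
    ∃ U : ℕ → Set G, (∀ n, T.NsMem n (U n)) ∧ bsPlus U k ∩ A = ∅ := by
  -- the invariant
  let Inv : ℕ → Set G → Prop := fun j P =>
    P ⊆ (T.H (k+j) : Set G) ∧ P ∩ A = ∅ ∧
      ∀ f ∈ A, f ∈ T.H (k+j+1) → ∃ M, T.NsMem (k+j+1) M ∧ f ∉ P * M
  let St : ℕ → Type _ := fun j => {PW : Set G × Set G // T.NsMem (k+j) PW.2 ∧ Inv j PW.1}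
  -- base state
  obtain ⟨W0, hW0, hW0A⟩ := T.exists_avoid (k+1)
    (T.isClosed_pre_of_finite hmetr (k+1) (hfin (k+1))) h1
  have hW0sub : W0 ⊆ W0 * W0 := fun w hw => ⟨w, hw, 1, hW0.2.2.1, mul_one w⟩
  have hbase : ∃ P0 : Set G, T.NsMem (k+0) P0 ∧ Inv 0 P0 := by
    refine ⟨W0 ∩ (T.H k : Set G), ?_, ?_, ?_, ?_⟩
    · refine ⟨Set.inter_subset_right, ?_, ⟨hW0.2.2.1, one_mem _⟩, ?_⟩
      · show IsOpen[T.τ (k+0)] (T.pre (k+0) (W0 ∩ (T.H k : Set G)))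
        have : T.pre (k+0) (W0 ∩ (T.H k : Set G)) = T.pre k W0 := by
          ext x; simp [pre, x.2]
        rw [this]
        exact T.isOpen_pre_of_le hcl (Nat.le_succ k) hW0.2.1
      · rw [Set.inter_inv, hW0.2.2.2]
        congr 1
        ext x; simp [Set.mem_inv, inv_mem_iff]
    · exact Set.inter_subset_right
    · apply Set.eq_empty_of_forall_notMem
      rintro x ⟨⟨hxW, _⟩, hxA⟩
      exact Set.eq_empty_iff_forall_notMem.mp hW0A x ⟨hW0sub hxW, hxA⟩
    · intro f hfA hfH
      refine ⟨W0, hW0, ?_⟩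
      rintro ⟨u, ⟨huW, _⟩, w, hwW, rfl⟩
      exact Set.eq_empty_iff_forall_notMem.mp hW0A (u*w) ⟨⟨u, huW, w, hwW, rfl⟩, hfA⟩
  -- step
  have hstep : ∀ j (s : St j), ∃ W' : Set G, T.NsMem (k+(j+1)) W' ∧
      Inv (j+1) (s.1.1 * W') := by
    intro j s
    obtain ⟨hW, hPH, hPA, hPM⟩ := s.2
    set P := s.1.1
    set F' := A ∩ (T.H (k+j+1) : Set G) with hF'
    have hM' : ∀ f : G, ∃ M, T.NsMem (k+j+1) M ∧ (f ∈ F' → f ∉ P * M) := by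
      intro f
      by_cases hf : f ∈ F'
      · obtain ⟨M, hM1, hM2⟩ := hPM f hf.1 hf.2
        exact ⟨M, hM1, fun _ => hM2⟩
      · exact ⟨(T.H (k+j+1) : Set G), T.nsMem_coe_H _, fun h => absurd h hf⟩
    choose Mf hMf1 hMf2 using hM'
    have hΩ : T.NsMem (k+j+1) ((T.H (k+j+1) : Set G) ∩ ⋂ f ∈ F', Mf f) :=
      T.nsMem_of_finite_inter (k+j+1) (hfin (k+j+1)) Mf (fun f hf => hMf1 f)
    obtain ⟨W', hW', hW'sq⟩ := T.exists_sq_subset (k+j+1) hΩ.2.2.1 hΩ.2.1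
    have hW'Ω : W' * W' ⊆ ⋂ f ∈ F', Mf f := fun x hx => ((hW'sq hx).2).2
    have hW'sub : W' ⊆ W' * W' := fun w hw => ⟨w, hw, 1, hW'.2.2.1, mul_one w⟩
    refine ⟨W', hW', ?_, ?_, ?_⟩
    · rintro x ⟨p, hp, w, hw, rfl⟩
      exact mul_mem (T.H_mono (by omega) (hPH hp)) (hW'.1 hw)
    · apply Set.eq_empty_of_forall_notMem
      rintro x ⟨⟨p, hp, w, hw, rfl⟩, hxA⟩
      have hxH : p * w ∈ T.H (k+j+1) :=
        mul_mem (T.H_mono (by omega) (hPH hp)) (hW'.1 hw)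
      have hxF' : p * w ∈ F' := ⟨hxA, hxH⟩
      have hwM : w ∈ Mf (p*w) := by
        have := hW'Ω (hW'sub hw)
        exact Set.mem_iInter₂.mp this (p*w) hxF'
      exact hMf2 (p*w) hxF' ⟨p, hp, w, hwM, rfl⟩
    · intro f hfA hfH2
      by_cases hf1 : f ∈ T.H (k+j+1)
      · -- old point: use trace-controlled neighborhood
        obtain ⟨M', hM', hM'tr⟩ := T.exists_sq_trace_subset hcl (k+j+1) hW'
        have hM'sub : M' ⊆ M' * M' := fun w hw => ⟨w, hw, 1, hM'.2.2.1, mul_one w⟩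
        refine ⟨M', hM', ?_⟩
        rintro ⟨pw, ⟨p, hp, w, hw, rfl⟩, m, hm, rfl⟩
        have hfF' : p * w * m ∈ F' := ⟨hfA, hf1⟩
        have hpwH : p * w ∈ T.H (k+j+1) :=
          mul_mem (T.H_mono (by omega) (hPH hp)) (hW'.1 hw)
        have hmH : m ∈ T.H (k+j+1) := by
          have : (p*w)⁻¹ * (p*w*m) ∈ T.H (k+j+1) := mul_mem (inv_mem hpwH) hf1
          simpa [mul_assoc] using this
        have hmW : m ∈ W' := hM'tr ⟨hM'sub hm, hmH⟩
        have hwm : w * m ∈ Mf (p*w*m) := by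
          have := hW'Ω ⟨w, hw, m, hmW, rfl⟩
          exact Set.mem_iInter₂.mp this _ hfF'
        exact hMf2 _ hfF' ⟨p, hp, w*m, hwm, by rw [mul_assoc]⟩
      · -- new point: avoid the coset H_{k+j+1} * {f}
        have hcoset : IsClosed[T.τ (k+j+2)] (T.pre (k+j+2) ((T.H (k+j+1) : Set G) * {f})) :=
          T.isClosed_pre_coset hcl (by omega) hfH2
        have h1c : (1:G) ∉ (T.H (k+j+1) : Set G) * {f} := by
          rintro ⟨h', hh', y, hy, hxy⟩
          have hyf : y = f := Set.mem_singleton_iff.mp hy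
          apply hf1
          have hfe : f = h'⁻¹ := eq_inv_of_mul_eq_one_right (by rw [← hyf]; exact hxy)
          rw [hfe]
          exact inv_mem hh'
        obtain ⟨M', hM', hM'C⟩ := T.exists_avoid (k+j+2) hcoset h1c
        have hM'sub : M' ⊆ M' * M' := fun w hw => ⟨w, hw, 1, hM'.2.2.1, mul_one w⟩
        refine ⟨M', hM', ?_⟩
        rintro ⟨pw, ⟨p, hp, w, hw, rfl⟩, m, hm, rfl⟩
        have hpwH : p * w ∈ T.H (k+j+1) :=
          mul_mem (T.H_mono (by omega) (hPH hp)) (hW'.1 hw)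
        have hmC : m ∈ (T.H (k+j+1) : Set G) * {p*w*m} :=
          ⟨(p*w)⁻¹, inv_mem hpwH, p*w*m, rfl, by group⟩
        exact Set.eq_empty_iff_forall_notMem.mp hM'C m ⟨hM'sub hm, hmC⟩
  -- build the sequence of states
  let step : ∀ j, St j → St (j+1) := fun j s =>
    ⟨(s.1.1 * Classical.choose (hstep j s), Classical.choose (hstep j s)),
      (Classical.choose_spec (hstep j s)).1, (Classical.choose_spec (hstep j s)).2⟩
  let base : St 0 := ⟨(Classical.choose hbase, Classical.choose hbase),
    (Classical.choose_spec hbase).1, (Classical.choose_spec hbase).2⟩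
  let st : ∀ j, St j := fun j => Nat.rec base step j
  have hst_succ : ∀ j, (st (j+1)).1.1 = (st j).1.1 * (st (j+1)).1.2 := fun j => rfl
  let U : ℕ → Set G := fun n => if h : k ≤ n then (st (n-k)).1.2 else (T.H n : Set G)
  have hUk : ∀ j, U (k+j) = (st j).1.2 := by
    intro j
    show (if h : k ≤ k + j then (st (k+j-k)).1.2 else _) = _
    rw [dif_pos (Nat.le_add_right k j), Nat.add_sub_cancel_left]
  have hUmem : ∀ n, T.NsMem n (U n) := by
    intro n
    by_cases h : k ≤ n
    · obtain ⟨j, rfl⟩ : ∃ j, n = k + j := ⟨n - k, by omega⟩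
      rw [hUk j]
      exact (st j).2.1
    · show T.NsMem n (if h : k ≤ n then (st (n-k)).1.2 else (T.H n : Set G))
      rw [dif_neg h]
      exact T.nsMem_coe_H n
  have hProd : ∀ j, bsProd U k j = (st j).1.1 := by
    intro j
    induction j with
    | zero =>
      show U k = (st 0).1.1
      have : U (k + 0) = (st 0).1.2 := hUk 0
      exact this
    | succ j ih =>
      rw [bsProd_succ', ih, hUk (j+1), ← hst_succ j]
  refine ⟨U, hUmem, ?_⟩
  apply Set.eq_empty_of_forall_notMem
  rintro x ⟨hx, hxA⟩
  rcases mem_iUnion.mp hx with ⟨j, hj⟩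
  rw [hProd j] at hj
  exact Set.eq_empty_iff_forall_notMem.mp (st j).2.2.2.1 x ⟨hj, hxA⟩

end GroupTower
namespace GroupTower

variable {G : Type*} [Group G] (T : GroupTower G) (τBS : TopologicalSpace G)

lemma mem_nhds_of_nsMem (hBS : T.IsBambooShoot τBS) {V : ℕ → Set G}
    (hV : ∀ n, T.NsMem n (V n)) (g : G) (k : ℕ) :
    g • bsU V k ∈ @nhds G τBS g :=
  (hBS g).mem_of_mem (i := (V, k)) hV

/-- Each `H m` is closed in the Bamboo-Shoot topology. -/
lemma isClosed_H (hcl : T.IsClosedTower) (hGC : T.GC) (hBS : T.IsBambooShoot τBS)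
    (m : ℕ) : IsClosed[τBS] ((T.H m : Set G)) := by
  letI := τBS
  rw [← isOpen_compl_iff, isOpen_iff_mem_nhds]
  intro g hg
  obtain ⟨N, hN⟩ := T.union g
  set k := max N m with hk
  have hgk : g ∈ T.H k := T.H_mono (le_max_left N m) hN
  set F : Set G := g⁻¹ • (T.H m : Set G) with hF
  have hFk : F ⊆ (T.H k : Set G) := by
    rintro x ⟨h, hh, rfl⟩
    exact mul_mem (inv_mem hgk) (T.H_mono (le_max_right N m) hh)
  have hFcl : ∀ J, k ≤ J → IsClosed[T.τ J] (T.pre J F) := by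
    intro J hJ
    letI := T.τ J
    haveI := T.topGroup J
    have hgJ : g ∈ T.H J := T.H_mono hJ hgk
    have heq : T.pre J F = (fun x : T.H J => (⟨g, hgJ⟩ : T.H J) * x) ⁻¹'
        (T.pre J (T.H m : Set G)) := by
      ext x
      simp only [pre, Set.mem_preimage]
      constructor
      · rintro ⟨h, hh, hx⟩
        show g * (x : G) ∈ (T.H m : Set G)
        rw [← hx]
        simpa using hh
      · intro hx
        exact ⟨g * (x : G), hx, by simp⟩
    rw [heq]
    exact (T.pre_H_closed hcl (le_trans (le_max_right N m) hJ)).preimage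
      (continuous_const.mul continuous_id)
  have h1F : (1:G) ∉ F := by
    rintro ⟨h, hh, hx⟩
    apply hg
    have : h = g := by
      have : g⁻¹ * h = 1 := hx
      have := eq_inv_of_mul_eq_one_left this
      simpa using this.symm
    rwa [this] at hh
  obtain ⟨U, hU, hUF⟩ := T.exists_bsPlus_avoid_closed hcl k hFk hFcl h1F
  obtain ⟨V, hV, hVU⟩ := hGC U hU k
  apply Filter.mem_of_superset (T.mem_nhds_of_nsMem τBS hBS hV g k)
  rintro y ⟨b, hb, rfl⟩ hmem
  have hbF : b ∈ F := ⟨g * b, hmem, by simp [mul_assoc]⟩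
  have hbP : b ∈ bsPlus U k := hVU hb
  exact Set.eq_empty_iff_forall_notMem.mp hUF b ⟨hbP, hbF⟩

/-- Sets with finite traces on every level are closed in the Bamboo-Shoot topology. -/
lemma isClosed_of_finite_traces (hcl : T.IsClosedTower)
    (hmetr : ∀ n, @TopologicalSpace.MetrizableSpace (T.H n) (T.τ n))
    (hGC : T.GC) (hBS : T.IsBambooShoot τBS)
    {A : Set G} (hfin : ∀ J, (A ∩ (T.H J : Set G)).Finite) :
    IsClosed[τBS] A := by
  letI := τBS
  rw [← isOpen_compl_iff, isOpen_iff_mem_nhds]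
  intro g hg
  obtain ⟨N, hN⟩ := T.union g
  set F : Set G := g⁻¹ • A with hF
  have hfinF : ∀ J, (F ∩ (T.H J : Set G)).Finite := by
    intro J
    have hsub : F ∩ (T.H J : Set G) ⊆ g⁻¹ • (A ∩ (T.H (max N J) : Set G)) := by
      rintro y ⟨⟨a, ha, rfl⟩, hyH⟩
      refine ⟨a, ⟨ha, ?_⟩, rfl⟩
      have hae : a = g * (g⁻¹ * a) := by group
      rw [hae]
      exact mul_mem (T.H_mono (le_max_left _ _) hN) (T.H_mono (le_max_right _ _) hyH)
    exact (((hfin (max N J)).image (fun y => g⁻¹ • y))).subset hsub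
  have h1F : (1:G) ∉ F := by
    rintro ⟨a, ha, hx⟩
    apply hg
    have : a = g := by
      have : g⁻¹ * a = 1 := hx
      simpa using (eq_inv_of_mul_eq_one_left this).symm
    rwa [this] at ha
  obtain ⟨U, hU, hUF⟩ := T.exists_bsPlus_avoid_finite hcl hmetr 0 hfinF h1F
  obtain ⟨V, hV, hVU⟩ := hGC U hU 0
  apply Filter.mem_of_superset (T.mem_nhds_of_nsMem τBS hBS hV g 0)
  rintro y ⟨b, hb, rfl⟩ hmem
  have hbF : b ∈ F := ⟨g * b, hmem, by simp [mul_assoc]⟩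
  exact Set.eq_empty_iff_forall_notMem.mp hUF b ⟨hVU hb, hbF⟩

/-- Compact subsets in the Bamboo-Shoot topology lie in some level of the tower. -/
lemma compact_subset_H (hcl : T.IsClosedTower)
    (hmetr : ∀ n, @TopologicalSpace.MetrizableSpace (T.H n) (T.τ n))
    (hGC : T.GC) (hBS : T.IsBambooShoot τBS)
    {K : Set G} (hK : @IsCompact G τBS K) :
    ∃ n, K ⊆ (T.H n : Set G) := by
  letI := τBS
  by_contra hcon
  push_neg at hcon
  have hx : ∀ n, ∃ y, y ∈ K ∧ y ∉ T.H n := by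
    intro n
    rcases Set.not_subset.mp (hcon n) with ⟨y, hyK, hyH⟩
    exact ⟨y, hyK, hyH⟩
  choose x hxK hxH using hx
  set D := Set.range x with hD
  have hDfin : ∀ B : Set G, B ⊆ D → ∀ J, (B ∩ (T.H J : Set G)).Finite := by
    intro B hB J
    have hsub : B ∩ (T.H J : Set G) ⊆ x '' (Set.Iio J) := by
      rintro y ⟨hyB, hyH⟩
      rcases hB hyB with ⟨i, rfl⟩
      refine ⟨i, ?_, rfl⟩
      by_contra hi
      rw [Set.mem_Iio, not_lt] at hi
      exact hxH i (T.H_mono hi hyH)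
    exact ((Set.finite_Iio J).image x).subset hsub
  have hDclosed : ∀ B : Set G, B ⊆ D → IsClosed[τBS] B := fun B hB =>
    T.isClosed_of_finite_traces τBS hcl hmetr hGC hBS (hDfin B hB)
  have hDK : D ⊆ K := by rintro y ⟨i, rfl⟩; exact hxK i
  have hDcpt : IsCompact D := hK.of_isClosed_subset (hDclosed D subset_rfl) hDK
  have hDinf : ¬ D.Finite := by
    intro hDfin'
    have hJ : ∃ J, ∀ d ∈ hDfin'.toFinset, d ∈ T.H J := by
      classical
      refine ⟨hDfin'.toFinset.sup (fun d => Classical.choose (T.union d)), ?_⟩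
      intro d hd
      exact T.H_mono (Finset.le_sup hd) (Classical.choose_spec (T.union d))
    rcases hJ with ⟨J, hJ⟩
    refine hxH J (hJ (x J) ?_)
    rw [Set.Finite.mem_toFinset]
    exact ⟨J, rfl⟩
  have hcov : D ⊆ ⋃ d : D, ((D \ {(d : G)})ᶜ) := fun y hy =>
    Set.mem_iUnion.mpr ⟨⟨y, hy⟩, by simp⟩
  obtain ⟨t, ht⟩ := hDcpt.elim_finite_subcover (fun d : D => (D \ {(d : G)})ᶜ)
    (fun d => (hDclosed _ Set.diff_subset).isOpen_compl) hcov
  have hDsub : D ⊆ (fun d : D => (d : G)) '' (t : Set D) := by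
    intro y hy
    rcases Set.mem_iUnion₂.mp (ht hy) with ⟨d, hd, hyd⟩
    have hyde : y = (d : G) := by
      by_contra hne
      exact hyd ⟨hy, hne⟩
    exact ⟨d, hd, hyde.symm⟩
  exact hDinf ((t.finite_toSet.image _).subset hDsub)

/-- Traces of BS-open sets are open in each level. -/
lemma isOpen_pre_BS (hcl : T.IsClosedTower) (hBS : T.IsBambooShoot τBS)
    {A : Set G} (hA : IsOpen[τBS] A) (n : ℕ) :
    IsOpen[T.τ n] (T.pre n A) := by
  letI := T.τ n
  rw [isOpen_iff_forall_mem_open]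
  intro x hx
  have hmem : A ∈ @nhds G τBS (x : G) := by
    letI := τBS
    exact hA.mem_nhds hx
  obtain ⟨⟨U, k⟩, hU, hsub⟩ := ((hBS (x : G)).mem_iff).mp hmem
  refine ⟨T.pre n ((x : G) • bsU U k), T.pre_mono hsub,
    T.isOpen_pre_smul_bsU hcl hU k n x.2, ?_⟩
  show (x : G) ∈ (x : G) • bsU U k
  exact ⟨1, one_mem_bsU U k (fun m => (hU m).2.2.1), mul_one _⟩

/-- The Bamboo-Shoot topology induces the original topology on each level. -/
lemma induced_eq (hcl : T.IsClosedTower) (hGC : T.GC) (hBS : T.IsBambooShoot τBS)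
    (n : ℕ) :
    TopologicalSpace.induced ((↑) : T.H n → G) τBS = T.τ n := by
  letI := τBS
  apply le_antisymm
  · -- hard direction : every τ n-open set is induced-open
    intro Oo hOo
    rw [isOpen_induced_iff]
    set S : Set G := ((↑) : T.H n → G) '' Oo with hS
    have hSH : S ⊆ (T.H n : Set G) := by rintro y ⟨z, _, rfl⟩; exact z.2
    have hpreS : T.pre n S = Oo := Set.preimage_image_eq Oo Subtype.coe_injective
    have hSopen : IsOpen[T.τ n] (T.pre n S) := by rwa [hpreS]
    have hnbhd : ∀ g ∈ S, ∃ V : ℕ → Set G, (∀ m, T.NsMem m (V m)) ∧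
        (g • bsU V n) ∩ (T.H n : Set G) ⊆ S := by
      intro g hgS
      have hgH : g ∈ T.H n := hSH hgS
      set S₁ : Set G := g⁻¹ • S with hS₁
      have hS₁H : S₁ ⊆ (T.H n : Set G) := by
        rintro y ⟨s, hs, rfl⟩
        exact mul_mem (inv_mem hgH) (hSH hs)
      have hS₁open : IsOpen[T.τ n] (T.pre n S₁) :=
        T.isOpen_pre_smul n (inv_mem hgH) hSopen
      set F : Set G := (T.H n : Set G) \ S₁ with hFd
      have hFk : F ⊆ (T.H n : Set G) := Set.diff_subset
      have hFcl : ∀ J, n ≤ J → IsClosed[T.τ J] (T.pre J F) := by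
        intro J hJ
        letI := T.τ J
        obtain ⟨S', hS'H, hS'o, hS'tr⟩ := T.exists_extension hcl hJ hS₁H hS₁open
        have heq : T.pre J F = T.pre J (T.H n : Set G) ∩ (T.pre J S')ᶜ := by
          ext y
          simp only [pre, Set.mem_preimage, Set.mem_inter_iff, Set.mem_compl_iff,
            Set.mem_diff]
          constructor
          · rintro ⟨hyH, hyS⟩
            refine ⟨hyH, fun hyS' => hyS ?_⟩
            have : (y : G) ∈ S' ∩ (T.H n : Set G) := ⟨hyS', hyH⟩
            rwa [hS'tr] at this
          · rintro ⟨hyH, hyS'⟩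
            refine ⟨hyH, fun hyS₁ => hyS' ?_⟩
            have : (y : G) ∈ S' ∩ (T.H n : Set G) := by rw [hS'tr]; exact hyS₁
            exact this.1
        rw [heq]
        exact IsClosed.inter (T.pre_H_closed hcl hJ) hS'o.isClosed_compl
      have h1F : (1:G) ∉ F := fun h => h.2 ⟨g, hgS, by simp⟩
      obtain ⟨U, hU, hUF⟩ := T.exists_bsPlus_avoid_closed hcl n hFk hFcl h1F
      obtain ⟨V, hV, hVU⟩ := hGC U hU n
      refine ⟨V, hV, ?_⟩
      rintro y ⟨⟨b, hb, rfl⟩, hyH⟩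
      have hbH : b ∈ T.H n := by
        have : g⁻¹ * (g * b) ∈ T.H n := mul_mem (inv_mem hgH) hyH
        simpa [mul_assoc] using this
      have hbnF : b ∉ F := fun hbF =>
        Set.eq_empty_iff_forall_notMem.mp hUF b ⟨hVU hb, hbF⟩
      have hbS₁ : b ∈ S₁ := by
        by_contra hbn
        exact hbnF ⟨hbH, hbn⟩
      rcases hbS₁ with ⟨s, hs, hsb⟩
      have hgbs : g * b = s := by
        rw [← hsb]
        simp [smul_eq_mul, mul_assoc]
      show g * b ∈ S
      rwa [hgbs]
    choose Vf hVf hVfsub using hnbhd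
    refine ⟨⋃ g : {y : G // y ∈ S}, interior ((g : G) • bsU (Vf g g.2) n),
      isOpen_iUnion (fun g => isOpen_interior), ?_⟩
    ext z
    constructor
    · intro hz
      rcases Set.mem_iUnion.mp hz with ⟨g, hzint⟩
      have hzmem : (z : G) ∈ (g : G) • bsU (Vf g g.2) n := interior_subset hzint
      have hzS : (z : G) ∈ S := hVfsub g g.2 ⟨hzmem, z.2⟩
      rw [← hpreS]
      exact hzS
    · intro hz
      have hgS : (z : G) ∈ S := ⟨z, hz, rfl⟩
      refine Set.mem_iUnion.mpr ⟨⟨(z : G), hgS⟩, ?_⟩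
      show (z : G) ∈ interior _
      rw [mem_interior_iff_mem_nhds]
      exact T.mem_nhds_of_nsMem τBS hBS (hVf _ hgS) (z : G) n
  · -- easy direction
    intro Oo hOo
    rw [isOpen_induced_iff] at hOo
    rcases hOo with ⟨A, hA, rfl⟩
    exact T.isOpen_pre_BS τBS hcl hBS hA n

end GroupTower
namespace GroupTower

variable {G : Type*} [Group G] (T : GroupTower G) (τBS : TopologicalSpace G)

/-- The Bamboo-Shoot topology is regular. -/
lemma regular_BS (hGC : T.GC) (hBS : T.IsBambooShoot τBS) : @RegularSpace G τBS := by
  letI := τBS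
  apply RegularSpace.of_exists_mem_nhds_isClosed_subset
  intro x s hs
  obtain ⟨⟨U, k⟩, hU, hsub⟩ := (hBS x).mem_iff.mp hs
  obtain ⟨V, hV, hVU⟩ := hGC U hU k
  have hVmem := T.mem_nhds_of_nsMem τBS hBS hV x k
  refine ⟨closure (x • bsU V k), Filter.mem_of_superset hVmem subset_closure,
    isClosed_closure, ?_⟩
  intro z hz
  have hnz := T.mem_nhds_of_nsMem τBS hBS hV z k
  rcases mem_closure_iff_nhds.mp hz _ hnz with ⟨y, hy1, hy2⟩
  rcases hy1 with ⟨c, hc, rfl⟩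
  rcases hy2 with ⟨a, ha, hax⟩
  apply hsub
  have hainv : a⁻¹ ∈ bsU V k := (mem_symm (bsU_inv V k)).mpr ha
  have hcinv : c⁻¹ ∈ bsU V k := (mem_symm (bsU_inv V k)).mpr hc
  have hmem : a * c⁻¹ ∈ bsU U k := by
    refine ⟨a, ?_, c⁻¹, hVU hcinv, rfl⟩
    exact Set.mem_inv.mpr (hVU hainv)
  refine ⟨a * c⁻¹, hmem, ?_⟩
  show x * (a * c⁻¹) = z
  have hax' : x * a = z * c := hax
  rw [← mul_assoc, hax', mul_inv_cancel_right]

end GroupTower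

/-- Every metrizable space has a σ-locally finite family of open sets which is
a k-network (indeed a base). -/
lemma exists_sigma_locally_finite_kNetwork (X : Type*) [TopologicalSpace X]
    [TopologicalSpace.MetrizableSpace X] :
    ∃ B : ℕ → Set (Set X), (∀ m, IsLocallyFiniteFamily (B m)) ∧
      (∀ m, ∀ s ∈ B m, IsOpen s) ∧ IsKNetwork (⋃ m, B m) := by
  letI : MetricSpace X := TopologicalSpace.metrizableSpaceMetric X
  have hcov : ∀ m : ℕ, ∃ v : X → Set X, (∀ i, IsOpen (v i)) ∧ (⋃ i, v i) = Set.univ ∧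
      LocallyFinite v ∧ ∀ i, v i ⊆ Metric.ball i (1/(m+1) : ℝ) := by
    intro m
    have huniv : (⋃ i : X, Metric.ball i (1/(m+1) : ℝ)) = Set.univ := by
      ext y
      simp only [Set.mem_iUnion, Set.mem_univ, iff_true]
      exact ⟨y, Metric.mem_ball_self (by positivity)⟩
    rcases precise_refinement (fun i : X => Metric.ball i (1/(m+1) : ℝ))
      (fun i => Metric.isOpen_ball) huniv with ⟨v, hvo, hvu, hvl, hvs⟩
    exact ⟨v, hvo, hvu, hvl, hvs⟩
  choose v hvo hvu hvl hvs using hcov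
  refine ⟨fun m => Set.range (v m), ?_, ?_, ?_⟩
  · intro m x
    rcases hvl m x with ⟨t, ht, hfin⟩
    refine ⟨t, ht, ?_⟩
    have hsub : {s | s ∈ Set.range (v m) ∧ (s ∩ t).Nonempty} ⊆
        (v m) '' {i | (v m i ∩ t).Nonempty} := by
      rintro s ⟨⟨i, rfl⟩, hne⟩
      exact ⟨i, hne, rfl⟩
    exact ((hfin.image _).subset hsub)
  · rintro m s ⟨i, rfl⟩
    exact hvo m i
  · intro K U hK hU hKU
    have hbase : ∀ x ∈ K, ∃ s, (s ∈ ⋃ m, Set.range (v m)) ∧ IsOpen s ∧ x ∈ s ∧ s ⊆ U := by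
      intro x hx
      rcases Metric.isOpen_iff.mp hU x (hKU hx) with ⟨ε, hε, hball⟩
      rcases exists_nat_one_div_lt (show (0:ℝ) < ε/2 by linarith) with ⟨m, hm⟩
      have hxcov : x ∈ ⋃ i, v m i := by rw [hvu m]; trivial
      rcases Set.mem_iUnion.mp hxcov with ⟨i, hi⟩
      refine ⟨v m i, Set.mem_iUnion.mpr ⟨m, ⟨i, rfl⟩⟩, hvo m i, hi, ?_⟩
      intro y hy
      apply hball
      have h1 : dist y i < 1/(m+1 : ℝ) := Metric.mem_ball.mp (hvs m i hy)
      have h2 : dist x i < 1/(m+1 : ℝ) := Metric.mem_ball.mp (hvs m i hi)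
      have h3 : dist y x ≤ dist y i + dist x i := dist_triangle_right y x i
      have : dist y x < ε := by linarith
      exact Metric.mem_ball.mpr this
    choose! sfun hs1 hs1o hs2 hs3 using hbase
    have hcov2 : K ⊆ ⋃ x : K, sfun (x : X) := fun y hy =>
      Set.mem_iUnion.mpr ⟨⟨y, hy⟩, hs2 y hy⟩
    obtain ⟨t, ht⟩ := hK.elim_finite_subcover (fun x : K => sfun (x : X))
      (fun x => hs1o (x : X) x.2) hcov2
    refine ⟨(fun x : K => sfun (x : X)) '' (t : Set K), ?_, t.finite_toSet.image _, ?_, ?_⟩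
    · rintro s ⟨x, _, rfl⟩
      exact hs1 (x : X) x.2
    · intro y hy
      rcases Set.mem_iUnion₂.mp (ht hy) with ⟨x, hxt, hyx⟩
      exact ⟨sfun (x : X), ⟨x, hxt, rfl⟩, hyx⟩
    · rintro y ⟨s, ⟨x, _, rfl⟩, hys⟩
      exact hs3 (x : X) x.2 hys

/-- For a closed tower of metrizable groups satisfying (GC), the group
`(G, τBS) = glim G_n` is an ℵ-space: regular with a σ-locally finite k-network. -/
theorem statement_5 {G : Type*} [Group G] (T : GroupTower G)
    (hclosed : T.IsClosedTower)
    (hmetr : ∀ n, @TopologicalSpace.MetrizableSpace (T.H n) (T.τ n))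
    (hGC : T.GC)
    (τBS : TopologicalSpace G) (hBS : T.IsBambooShoot τBS) :
    @IsAlephSpace G τBS := by
  constructor
  · exact T.regular_BS τBS hGC hBS
  · -- σ-locally finite k-network
    have hexists : ∀ n : ℕ, ∃ B : ℕ → Set (Set (T.H n)),
        (∀ m, @IsLocallyFiniteFamily _ (T.τ n) (B m)) ∧
        (∀ m, ∀ s ∈ B m, IsOpen[T.τ n] s) ∧
        @IsKNetwork _ (T.τ n) (⋃ m, B m) := fun n =>
      @exists_sigma_locally_finite_kNetwork (T.H n) (T.τ n) (hmetr n)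
    choose B hBlf hBopen hBkn using hexists
    set Fam : ℕ → ℕ → Set (Set G) :=
      fun n m => (Set.image ((↑) : T.H n → G)) '' (B n m) with hFam
    refine ⟨fun p => Fam p.unpair.1 p.unpair.2, ?_, ?_⟩
    · -- local finiteness
      intro p
      set n := p.unpair.1
      set m := p.unpair.2
      intro x
      by_cases hx : x ∈ T.H n
      · rcases hBlf n m ⟨x, hx⟩ with ⟨Vs, hVs, hfin⟩
        have hindeq := T.induced_eq τBS hclosed hGC hBS n
        rw [← hindeq] at hVs
        letI := τBS
        rw [nhds_induced ((↑) : T.H n → G) ⟨x, hx⟩] at hVs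
        rcases Filter.mem_comap.mp hVs with ⟨V, hV, hVsub⟩
        refine ⟨V, hV, ?_⟩
        have hsub : {s | s ∈ Fam n m ∧ (s ∩ V).Nonempty} ⊆
            (Set.image ((↑) : T.H n → G)) '' {b | b ∈ B n m ∧ (b ∩ Vs).Nonempty} := by
          rintro s ⟨⟨b, hb, rfl⟩, ⟨y, hy1, hy2⟩⟩
          rcases hy1 with ⟨q, hq, rfl⟩
          exact ⟨b, ⟨hb, ⟨q, hq, hVsub hy2⟩⟩, rfl⟩
        exact ((hfin.image _).subset hsub)
      · letI := τBS
        refine ⟨(T.H n : Set G)ᶜ,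
          (T.isClosed_H τBS hclosed hGC hBS n).isOpen_compl.mem_nhds hx, ?_⟩
        have hempty : {s | s ∈ Fam n m ∧ (s ∩ (T.H n : Set G)ᶜ).Nonempty} = ∅ := by
          apply Set.eq_empty_of_forall_notMem
          rintro s ⟨⟨b, _, rfl⟩, ⟨y, ⟨q, _, rfl⟩, hy2⟩⟩
          exact hy2 q.2
        rw [hempty]
        exact Set.finite_empty
    · -- k-network
      intro K U hK hU hKU
      obtain ⟨n, hKn⟩ := T.compact_subset_H τBS hclosed hmetr hGC hBS hK
      set Ks : Set (T.H n) := T.pre n K with hKsdef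
      have himg : ((↑) : T.H n → G) '' Ks = K := by
        apply Set.image_preimage_eq_of_subset
        rwa [Subtype.range_coe_subtype]
      have hKsc : @IsCompact _ (TopologicalSpace.induced ((↑) : T.H n → G) τBS) Ks := by
        letI := τBS
        exact Subtype.isCompact_iff.mpr (by rwa [himg])
      rw [T.induced_eq τBS hclosed hGC hBS n] at hKsc
      have hUso : IsOpen[T.τ n] (T.pre n U) := T.isOpen_pre_BS τBS hclosed hBS hU n
      have hKsUs : Ks ⊆ T.pre n U := fun q hq => hKU hq
      obtain ⟨Ft, hFt1, hFt2, hFt3, hFt4⟩ := hBkn n Ks (T.pre n U) hKsc hUso hKsUs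
      refine ⟨(Set.image ((↑) : T.H n → G)) '' Ft, ?_, hFt2.image _, ?_, ?_⟩
      · rintro s ⟨b, hb, rfl⟩
        rcases Set.mem_iUnion.mp (hFt1 hb) with ⟨m, hm⟩
        refine Set.mem_iUnion.mpr ⟨Nat.pair n m, ?_⟩
        rw [show (Nat.pair n m).unpair = (n, m) from Nat.unpair_pair n m]
        exact ⟨b, hm, rfl⟩
      · intro y hy
        have hyn : y ∈ T.H n := hKn hy
        have hq : (⟨y, hyn⟩ : T.H n) ∈ Ks := hy
        rcases hFt3 hq with ⟨b, hb, hqb⟩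
        exact ⟨((↑) : T.H n → G) '' b, ⟨b, hb, rfl⟩, ⟨⟨y, hyn⟩, hqb, rfl⟩⟩
      · rintro y ⟨s, ⟨b, hb, rfl⟩, ⟨q, hq, rfl⟩⟩
        exact hFt4 ⟨b, hb, hq⟩
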